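/- Fix an integer ℓ ≥ 1, an integer r with −1 ≤ r ≤ 2ℓ−2, and a ∈ (0, 1/2). For m ∈ ℕ set n = 2ℓm + r, and define B_n(x) = − Σ_{j=0}^{m−1} Σ_{k=0}^{ℓ−1} ( cos((ℓj+k)x) + cos((n−ℓ+1−ℓj+k)x) ) · ( (ℓj+k) sin((ℓj+k)x) + (n−ℓ+1−ℓj+k) sin((n−ℓ+1−ℓj+k)x) ) − Σ_{j=ℓm}^{ℓm+r} j sin(jx) cos(jx), and E_ℓ(n) = [0, π/2] \ ⋃_{i=0}^{⌊ℓ/2⌋} [iπ/ℓ − n^{−a}, iπ/ℓ + n^{−a}]. Then there exist C > 0 and N ∈ ℕ such that for all m with n = 2ℓm + r ≥ N and all x ∈ E_ℓ(n), | B_n(x) + n² u_ℓ(x) sin(nx)/4 | ≤ C n^{1+a}. -/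

import Mathlib

open Real


private lemma pq_expand (P Q x : ℝ) :
    (Real.cos (P*x) + Real.cos (Q*x)) * (P * Real.sin (P*x) + Q * Real.sin (Q*x))
      = P * Real.sin (2*P*x)/2 + Q * Real.sin (2*Q*x)/2
        + ((P+Q)/2) * Real.sin ((P+Q)*x) + ((P-Q)/2) * Real.sin ((P-Q)*x) := by
  have h1 : Real.sin (2*P*x) = 2 * Real.sin (P*x) * Real.cos (P*x) := by
    rw [show 2*P*x = 2*(P*x) by ring, Real.sin_two_mul]
  have h2 : Real.sin (2*Q*x) = 2 * Real.sin (Q*x) * Real.cos (Q*x) := by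
    rw [show 2*Q*x = 2*(Q*x) by ring, Real.sin_two_mul]
  have h3 : Real.sin ((P+Q)*x) = Real.sin (P*x) * Real.cos (Q*x) + Real.cos (P*x) * Real.sin (Q*x) := by
    rw [show (P+Q)*x = P*x + Q*x by ring, Real.sin_add]
  have h4 : Real.sin ((P-Q)*x) = Real.sin (P*x) * Real.cos (Q*x) - Real.cos (P*x) * Real.sin (Q*x) := by
    rw [show (P-Q)*x = P*x - Q*x by ring, Real.sin_sub]
  rw [h1, h2, h3, h4]; ring

private lemma sin_sum_AP (α x : ℝ) (L : ℕ) (hx : Real.sin x ≠ 0) :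
    ∑ k ∈ Finset.range L, Real.sin (α + 2*(k:ℝ)*x)
      = Real.sin (α + ((L:ℝ) - 1) * x) * Real.sin ((L:ℝ) * x) / Real.sin x := by
  rw [eq_div_iff hx]
  set f : ℕ → ℝ := fun k => Real.cos (α + (2*(k:ℝ) - 1) * x) with hf
  have h1 : ∀ k : ℕ, 2 * (Real.sin (α + 2*(k:ℝ)*x) * Real.sin x) = f k - f (k+1) := by
    intro k
    have e := Real.cos_sub_cos (α + (2*(k:ℝ) - 1) * x) (α + (2*(k:ℝ) + 1) * x)
    have e1 : (α + (2*(k:ℝ) - 1) * x + (α + (2*(k:ℝ) + 1) * x))/2 = α + 2*(k:ℝ)*x := by ring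
    have e2 : (α + (2*(k:ℝ) - 1) * x - (α + (2*(k:ℝ) + 1) * x))/2 = -x := by ring
    rw [e1, e2, Real.sin_neg] at e
    have : f (k+1) = Real.cos (α + (2*(k:ℝ) + 1) * x) := by
      simp only [hf]; push_cast; ring_nf
    rw [this]; linarith
  have h3 : ∑ k ∈ Finset.range L, 2 * (Real.sin (α + 2*(k:ℝ)*x) * Real.sin x) = f 0 - f L :=
    (Finset.sum_congr rfl fun k _ => h1 k).trans (Finset.sum_range_sub' f L)
  have h4 : f 0 - f L = 2 * (Real.sin (α + ((L:ℝ) - 1) * x) * Real.sin ((L:ℝ)*x)) := by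
    have e := Real.cos_sub_cos (α + (2*(0:ℝ) - 1) * x) (α + (2*(L:ℝ) - 1) * x)
    have e1 : (α + (2*(0:ℝ) - 1) * x + (α + (2*(L:ℝ) - 1) * x))/2 = α + ((L:ℝ) - 1)*x := by ring
    have e2 : (α + (2*(0:ℝ) - 1) * x - (α + (2*(L:ℝ) - 1) * x))/2 = -((L:ℝ)*x) := by ring
    rw [e1, e2, Real.sin_neg] at e
    have e0 : f 0 = Real.cos (α + (2*(0:ℝ) - 1) * x) := by simp only [hf]; norm_num
    have eL : f L = Real.cos (α + (2*(L:ℝ) - 1) * x) := rfl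
    rw [e0, eL]; linarith
  have h5 : ∑ k ∈ Finset.range L, 2 * (Real.sin (α + 2*(k:ℝ)*x) * Real.sin x)
      = 2 * ((∑ k ∈ Finset.range L, Real.sin (α + 2*(k:ℝ)*x)) * Real.sin x) := by
    rw [← Finset.mul_sum, ← Finset.sum_mul]
  linarith

private lemma abs_sin_sum_le (φ t : ℝ) (N : ℕ) (ht : Real.sin t ≠ 0) :
    |∑ j ∈ Finset.range N, Real.sin (φ + 2*(j:ℝ)*t)| ≤ 1 / |Real.sin t| := by
  rw [sin_sum_AP φ t N ht, abs_div]
  have hpos : 0 < |Real.sin t| := abs_pos.2 ht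
  have hnum : |Real.sin (φ + ((N:ℝ)-1)*t) * Real.sin ((N:ℝ)*t)| ≤ 1 := by
    rw [abs_mul]
    have a1 : |Real.sin (φ + ((N:ℝ)-1)*t)| ≤ 1 := abs_le.2 ⟨Real.neg_one_le_sin _, Real.sin_le_one _⟩
    have a2 : |Real.sin ((N:ℝ)*t)| ≤ 1 := abs_le.2 ⟨Real.neg_one_le_sin _, Real.sin_le_one _⟩
    nlinarith [abs_nonneg (Real.sin (φ + ((N:ℝ)-1)*t)), abs_nonneg (Real.sin ((N:ℝ)*t))]
  gcongr

private lemma abel_linear (c d φ t : ℝ) (N : ℕ) (ht : Real.sin t ≠ 0) :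
    |∑ j ∈ Finset.range N, (c + d*(j:ℝ)) * Real.sin (φ + 2*(j:ℝ)*t)|
      ≤ (|c| + 2 * |d| * N) / |Real.sin t| := by
  have hpos : 0 < |Real.sin t| := abs_pos.2 ht
  rcases Nat.eq_zero_or_pos N with h | h
  · subst h; simp; positivity
  have hG : ∀ M : ℕ, |∑ j ∈ Finset.range M, Real.sin (φ + 2*(j:ℝ)*t)| ≤ 1/|Real.sin t| :=
    fun M => abs_sin_sum_le φ t M ht
  have bp := Finset.sum_range_by_parts (fun j => c + d*(j:ℝ))
      (fun j => Real.sin (φ + 2*(j:ℝ)*t)) N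
  simp only [smul_eq_mul] at bp
  rw [bp]
  have hA : |(c + d*((N-1:ℕ):ℝ)) * ∑ j ∈ Finset.range N, Real.sin (φ + 2*(j:ℝ)*t)|
      ≤ (|c| + |d| * N) / |Real.sin t| := by
    rw [abs_mul]
    have h1 : |c + d*((N-1:ℕ):ℝ)| ≤ |c| + |d| * N := by
      refine (abs_add_le _ _).trans ?_
      rw [abs_mul]
      have : ((N-1:ℕ):ℝ) ≤ (N:ℝ) := by exact_mod_cast Nat.sub_le N 1
      have : |((N-1:ℕ):ℝ)| ≤ (N:ℝ) := by
        rw [abs_of_nonneg (by positivity)]; exact this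
      nlinarith [abs_nonneg c, abs_nonneg d, abs_nonneg ((N-1:ℕ):ℝ)]
    calc |c + d*((N-1:ℕ):ℝ)| * |∑ j ∈ Finset.range N, Real.sin (φ + 2*(j:ℝ)*t)|
        ≤ (|c| + |d| * N) * (1/|Real.sin t|) := by
          apply mul_le_mul h1 (hG N) (abs_nonneg _) (by positivity)
      _ = (|c| + |d| * N) / |Real.sin t| := by ring
  have hB : |∑ i ∈ Finset.range (N-1), ((c + d*((i+1:ℕ):ℝ)) - (c + d*(i:ℝ)))
        * ∑ j ∈ Finset.range (i+1), Real.sin (φ + 2*(j:ℝ)*t)|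
      ≤ (|d| * N) / |Real.sin t| := by
    refine (Finset.abs_sum_le_sum_abs _ _).trans ?_
    have : ∀ i ∈ Finset.range (N-1), |((c + d*((i+1:ℕ):ℝ)) - (c + d*(i:ℝ)))
        * ∑ j ∈ Finset.range (i+1), Real.sin (φ + 2*(j:ℝ)*t)| ≤ |d| * (1/|Real.sin t|) := by
      intro i _
      rw [abs_mul]
      have hc : ((c + d*((i+1:ℕ):ℝ)) - (c + d*(i:ℝ))) = d := by push_cast; ring
      rw [hc]
      exact mul_le_mul_of_nonneg_left (hG (i+1)) (abs_nonneg d)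
    refine (Finset.sum_le_sum this).trans ?_
    rw [Finset.sum_const, Finset.card_range, nsmul_eq_mul]
    have : ((N-1:ℕ):ℝ) ≤ (N:ℝ) := by exact_mod_cast Nat.sub_le N 1
    have h0 : (0:ℝ) ≤ |d| * (1/|Real.sin t|) := by positivity
    calc ((N-1:ℕ):ℝ) * (|d| * (1/|Real.sin t|)) ≤ (N:ℝ) * (|d| * (1/|Real.sin t|)) := by
          apply mul_le_mul_of_nonneg_right this h0
      _ = (|d| * N)/|Real.sin t| := by ring
  refine (abs_sub _ _).trans ?_
  refine (add_le_add hA hB).trans_eq ?_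
  ring

private lemma abs_sin_ge (y : ℝ) : (2/π) * |y - (round (y/π) : ℝ) * π| ≤ |Real.sin y| := by
  have hπ := Real.pi_pos
  set k := round (y/π) with hk
  have hd : |y - (k:ℝ)*π| ≤ π/2 := by
    have h := abs_sub_round (y/π)
    have e : y - (k:ℝ)*π = (y/π - k) * π := by field_simp
    rw [e, abs_mul, abs_of_pos hπ]
    calc |y/π - (k:ℝ)| * π ≤ (1/2)*π := by apply mul_le_mul_of_nonneg_right h hπ.le
      _ = π/2 := by ring
  have hsin : Real.sin y = (-1)^k * Real.sin (y - (k:ℝ)*π) := by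
    have h := Real.sin_add_int_mul_pi (y - (k:ℝ)*π) k
    have e : y - (k:ℝ)*π + (k:ℝ)*π = y := by ring
    rw [e] at h
    exact h
  have hpm : |((-1:ℝ))^k| = 1 := by
    rcases Int.even_or_odd k with he | ho
    · rw [he.neg_one_zpow, abs_one]
    · rw [ho.neg_one_zpow, abs_neg, abs_one]
  have h2 : |Real.sin y| = |Real.sin (y - (k:ℝ)*π)| := by
    rw [hsin, abs_mul, hpm, one_mul]
  rw [h2]
  set d := y - (k:ℝ)*π with hdd
  have h3 : |Real.sin d| = Real.sin |d| := by
    rcases le_or_gt 0 d with h | h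
    · rw [abs_of_nonneg h, abs_of_nonneg]
      exact Real.sin_nonneg_of_nonneg_of_le_pi h (by rw [abs_of_nonneg h] at hd; linarith)
    · have hsd : Real.sin d ≤ 0 :=
        Real.sin_nonpos_of_nonpos_of_neg_pi_le h.le (by rw [abs_of_neg h] at hd; linarith)
      rw [abs_of_neg h, abs_of_nonpos hsd, Real.sin_neg]
  rw [h3]
  exact Real.mul_le_sin (abs_nonneg d) hd

private lemma mySumCollapse (f : ℕ → ℝ) (L m : ℕ) :
    ∑ j ∈ Finset.range m, ∑ k ∈ Finset.range L, f (L*j + k) = ∑ v ∈ Finset.range (L*m), f v := by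
  induction m with
  | zero => simp
  | succ m ih =>
    rw [Finset.sum_range_succ, ih, Nat.mul_succ, Finset.sum_range_add]

private lemma big_identity (ℓ m n t : ℕ) (x : ℝ) (hnt : n + 1 = 2*(ℓ*m) + t)
    (hcast_q : ∀ j, j < m → ∀ k : ℕ, ((n - ℓ + 1 - ℓ*j + k : ℕ):ℝ) = (n:ℝ) - ℓ + 1 - ℓ*j + k)
    (hidx_q : ∀ j, j < m → ∀ k : ℕ, (n - ℓ + 1 - ℓ*(m-1-j) + k) = ℓ*m + t + (ℓ*j + k)) :
    (∑ j ∈ Finset.range m, ∑ k ∈ Finset.range ℓ,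
        (Real.cos (((ℓ * j + k : ℕ) : ℝ) * x)
          + Real.cos (((n - ℓ + 1 - ℓ * j + k : ℕ) : ℝ) * x))
        * (((ℓ * j + k : ℕ) : ℝ) * Real.sin (((ℓ * j + k : ℕ) : ℝ) * x)
          + ((n - ℓ + 1 - ℓ * j + k : ℕ) : ℝ)
              * Real.sin (((n - ℓ + 1 - ℓ * j + k : ℕ) : ℝ) * x)))
      + ∑ i ∈ Finset.range t,
          ((ℓ * m + i : ℕ) : ℝ) * Real.sin (((ℓ * m + i : ℕ) : ℝ) * x)
            * Real.cos (((ℓ * m + i : ℕ) : ℝ) * x)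
    = (∑ v ∈ Finset.range (n+1), (v:ℝ) * Real.sin (2*(v:ℝ)*x)/2)
      + (m:ℝ) * (∑ k ∈ Finset.range ℓ,
          (((n:ℝ) - (ℓ:ℝ) + 1 + 2*(k:ℝ))/2) * Real.sin (((n:ℝ) - (ℓ:ℝ) + 1 + 2*(k:ℝ))*x))
      + (ℓ:ℝ) * (∑ j ∈ Finset.range m,
          ((2*(ℓ:ℝ)*(j:ℝ) + (ℓ:ℝ) - 1 - (n:ℝ))/2)
            * Real.sin ((2*(ℓ:ℝ)*(j:ℝ) + (ℓ:ℝ) - 1 - (n:ℝ))*x)) := by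
  set g : ℕ → ℝ := fun v => (v:ℝ) * Real.sin (2*(v:ℝ)*x)/2 with hg
  -- Step 1: expand the double sum termwise
  have step1 : ∀ j ∈ Finset.range m, ∀ k ∈ Finset.range ℓ,
      (Real.cos (((ℓ * j + k : ℕ) : ℝ) * x)
          + Real.cos (((n - ℓ + 1 - ℓ * j + k : ℕ) : ℝ) * x))
        * (((ℓ * j + k : ℕ) : ℝ) * Real.sin (((ℓ * j + k : ℕ) : ℝ) * x)
          + ((n - ℓ + 1 - ℓ * j + k : ℕ) : ℝ)
              * Real.sin (((n - ℓ + 1 - ℓ * j + k : ℕ) : ℝ) * x))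
      = g (ℓ*j+k) + g (n - ℓ + 1 - ℓ*j + k)
        + (((n:ℝ) - (ℓ:ℝ) + 1 + 2*(k:ℝ))/2) * Real.sin (((n:ℝ) - (ℓ:ℝ) + 1 + 2*(k:ℝ))*x)
        + ((2*(ℓ:ℝ)*(j:ℝ) + (ℓ:ℝ) - 1 - (n:ℝ))/2)
            * Real.sin ((2*(ℓ:ℝ)*(j:ℝ) + (ℓ:ℝ) - 1 - (n:ℝ))*x) := by
    intro j hj k hk
    rw [Finset.mem_range] at hj
    have hQ := hcast_q j hj k
    rw [pq_expand]
    have e1 : ((ℓ*j+k:ℕ):ℝ) + ((n - ℓ + 1 - ℓ*j + k:ℕ):ℝ) = (n:ℝ) - (ℓ:ℝ) + 1 + 2*(k:ℝ) := by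
      rw [hQ]; push_cast; ring
    have e2 : ((ℓ*j+k:ℕ):ℝ) - ((n - ℓ + 1 - ℓ*j + k:ℕ):ℝ)
        = 2*(ℓ:ℝ)*(j:ℝ) + (ℓ:ℝ) - 1 - (n:ℝ) := by
      rw [hQ]; push_cast; ring
    rw [e1, e2]
  rw [Finset.sum_congr rfl fun j hj => Finset.sum_congr rfl fun k hk => step1 j hj k hk]
  -- split the fourfold sum
  simp only [Finset.sum_add_distrib]
  -- piece A
  have hA : ∑ j ∈ Finset.range m, ∑ k ∈ Finset.range ℓ, g (ℓ*j+k)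
      = ∑ v ∈ Finset.range (ℓ*m), g v := mySumCollapse g ℓ m
  -- piece B
  have hB : ∑ j ∈ Finset.range m, ∑ k ∈ Finset.range ℓ, g (n - ℓ + 1 - ℓ*j + k)
      = ∑ v ∈ Finset.range (ℓ*m), g (ℓ*m + t + v) := by
    rw [← Finset.sum_range_reflect (fun j => ∑ k ∈ Finset.range ℓ, g (n - ℓ + 1 - ℓ*j + k)) m]
    have : ∀ j ∈ Finset.range m, ∑ k ∈ Finset.range ℓ, g (n - ℓ + 1 - ℓ*(m-1-j) + k)
        = ∑ k ∈ Finset.range ℓ, g (ℓ*m + t + (ℓ*j + k)) := by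
      intro j hj
      rw [Finset.mem_range] at hj
      exact Finset.sum_congr rfl fun k _ => by rw [hidx_q j hj k]
    rw [Finset.sum_congr rfl this]
    exact mySumCollapse (fun v => g (ℓ*m + t + v)) ℓ m
  -- piece C1 (independent of j)
  have hC1 : ∑ j ∈ Finset.range m, ∑ k ∈ Finset.range ℓ,
        (((n:ℝ) - (ℓ:ℝ) + 1 + 2*(k:ℝ))/2) * Real.sin (((n:ℝ) - (ℓ:ℝ) + 1 + 2*(k:ℝ))*x)
      = (m:ℝ) * (∑ k ∈ Finset.range ℓ,
        (((n:ℝ) - (ℓ:ℝ) + 1 + 2*(k:ℝ))/2) * Real.sin (((n:ℝ) - (ℓ:ℝ) + 1 + 2*(k:ℝ))*x)) := by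
    rw [Finset.sum_const, Finset.card_range, nsmul_eq_mul]
  -- piece C2 (independent of k)
  have hC2 : ∑ j ∈ Finset.range m, ∑ k ∈ Finset.range ℓ,
        ((2*(ℓ:ℝ)*(j:ℝ) + (ℓ:ℝ) - 1 - (n:ℝ))/2)
          * Real.sin ((2*(ℓ:ℝ)*(j:ℝ) + (ℓ:ℝ) - 1 - (n:ℝ))*x)
      = (ℓ:ℝ) * (∑ j ∈ Finset.range m,
        ((2*(ℓ:ℝ)*(j:ℝ) + (ℓ:ℝ) - 1 - (n:ℝ))/2)
          * Real.sin ((2*(ℓ:ℝ)*(j:ℝ) + (ℓ:ℝ) - 1 - (n:ℝ))*x)) := by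
    rw [Finset.mul_sum]
    exact Finset.sum_congr rfl fun j _ => by
      rw [Finset.sum_const, Finset.card_range, nsmul_eq_mul]
  -- S2
  have hS2 : ∑ i ∈ Finset.range t,
        ((ℓ * m + i : ℕ) : ℝ) * Real.sin (((ℓ * m + i : ℕ) : ℝ) * x)
          * Real.cos (((ℓ * m + i : ℕ) : ℝ) * x)
      = ∑ i ∈ Finset.range t, g (ℓ*m + i) := by
    refine Finset.sum_congr rfl fun i _ => ?_
    simp only [hg]
    rw [show 2*((ℓ*m+i:ℕ):ℝ)*x = 2*(((ℓ*m+i:ℕ):ℝ)*x) by ring, Real.sin_two_mul]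
    ring
  rw [hA, hB, hC1, hC2, hS2]
  -- combine the three g-sums
  have hsplit : ∑ v ∈ Finset.range (n+1), g v
      = ∑ v ∈ Finset.range (ℓ*m), g v + ∑ i ∈ Finset.range t, g (ℓ*m + i)
        + ∑ v ∈ Finset.range (ℓ*m), g (ℓ*m + t + v) := by
    have hnn : n + 1 = (ℓ*m + t) + ℓ*m := by omega
    rw [hnn, Finset.sum_range_add, Finset.sum_range_add]
  rw [hsplit]
  ring



/-- `u_ℓ(s) = sin(ℓ s) / (ℓ sin s)`. -/
noncomputable def uFun (ℓ : ℕ) (s : ℝ) : ℝ := Real.sin (ℓ * s) / (ℓ * Real.sin s)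

/-- `E_ℓ(n) = [0, π/2] \ ⋃_{i=0}^{⌊ℓ/2⌋} [iπ/ℓ − n^{−a}, iπ/ℓ + n^{−a}]`. -/
noncomputable def ESet (ℓ : ℕ) (a : ℝ) (n : ℕ) : Set ℝ :=
  Set.Icc (0:ℝ) (π / 2) \
    ⋃ i ∈ Finset.range (ℓ / 2 + 1),
      Set.Icc ((i : ℝ) * π / ℓ - (n : ℝ) ^ (-a)) ((i : ℝ) * π / ℓ + (n : ℝ) ^ (-a))

set_option maxHeartbeats 8000000 in
/-- With `n = 2ℓm + r`, on `E_ℓ(n)` the quantity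
`B_n(x) = − Σ_{j<m} Σ_{k<ℓ} (cos((ℓj+k)x) + cos((n−ℓ+1−ℓj+k)x))
  ·((ℓj+k) sin((ℓj+k)x) + (n−ℓ+1−ℓj+k) sin((n−ℓ+1−ℓj+k)x)) − Σ_{i≤r} (ℓm+i) sin((ℓm+i)x) cos((ℓm+i)x)`
equals `−n² u_ℓ(x) sin(nx)/4 + O(n^{1+a})`. -/
theorem B_asymptotics (ℓ : ℕ) (hℓ : 1 ≤ ℓ) (r : ℤ) (hr1 : -1 ≤ r) (hr2 : r ≤ 2 * ℓ - 2)
    (a : ℝ) (ha : a ∈ Set.Ioo (0:ℝ) (1/2)) :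
    ∃ C > 0, ∃ N : ℕ, ∀ m n : ℕ, (n : ℤ) = 2 * ℓ * m + r → N ≤ n →
      ∀ x ∈ ESet ℓ a n,
      |(- ∑ j ∈ Finset.range m, ∑ k ∈ Finset.range ℓ,
            (Real.cos (((ℓ * j + k : ℕ) : ℝ) * x)
              + Real.cos (((n - ℓ + 1 - ℓ * j + k : ℕ) : ℝ) * x))
            * (((ℓ * j + k : ℕ) : ℝ) * Real.sin (((ℓ * j + k : ℕ) : ℝ) * x)
              + ((n - ℓ + 1 - ℓ * j + k : ℕ) : ℝ)
                  * Real.sin (((n - ℓ + 1 - ℓ * j + k : ℕ) : ℝ) * x))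
          - ∑ i ∈ Finset.range (r + 1).toNat,
              ((ℓ * m + i : ℕ) : ℝ) * Real.sin (((ℓ * m + i : ℕ) : ℝ) * x)
                * Real.cos (((ℓ * m + i : ℕ) : ℝ) * x))
        + (n : ℝ) ^ 2 * uFun ℓ x * Real.sin (n * x) / 4|
      ≤ C * (n : ℝ) ^ ((1 : ℝ) + a) := by
  obtain ⟨ha0, ha1⟩ := ha
  have hπ := Real.pi_pos
  refine ⟨20*((ℓ:ℝ)+1), by positivity, 2*ℓ+2, ?_⟩
  intro m n hn hN x hx
  simp only [ESet, Set.mem_diff] at hx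
  obtain ⟨hxI, hxU⟩ := hx
  obtain ⟨hx0, hxpi⟩ := hxI
  set t : ℕ := (r+1).toNat with htdef
  have hn1 : 1 ≤ n := by omega
  have hnR : (0:ℝ) < n := by exact_mod_cast hn1
  have htr : (t:ℤ) = r + 1 := Int.toNat_of_nonneg (by linarith)
  clear_value t
  have hnt : n + 1 = 2*(ℓ*m) + t := by
    have hZ : ((n:ℤ)) + 1 = 2*((ℓ:ℤ)*m) + t := by rw [htr]; push_cast at hn ⊢; linarith
    exact_mod_cast hZ
  have ht2 : t ≤ 2*ℓ := by omega
  have hP2 : ℓ*m ≤ n := by omega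
  have hℓmR : ((ℓ:ℝ))*m ≤ (n:ℝ) := by
    have : ((ℓ*m:ℕ):ℝ) ≤ (n:ℝ) := by exact_mod_cast hP2
    push_cast at this; linarith
  have hℓR : (1:ℝ) ≤ (ℓ:ℝ) := by exact_mod_cast hℓ
  have hℓn : (ℓ:ℝ) ≤ (n:ℝ) := by exact_mod_cast (by omega : ℓ ≤ n)
  have hnR1 : (1:ℝ) ≤ (n:ℝ) := by exact_mod_cast hn1
  -- the exceptional-set lower bounds
  set ε : ℝ := (n:ℝ)^(-a) with hεdef
  have hε0 : 0 < ε := Real.rpow_pos_of_pos hnR _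
  have hε1 : ε ≤ 1 := Real.rpow_le_one_of_one_le_of_nonpos hnR1 (by linarith)
  have hxU' : ∀ i, i ∈ Finset.range (ℓ/2+1) →
      x ∉ Set.Icc ((i:ℝ)*π/ℓ - ε) ((i:ℝ)*π/ℓ + ε) := by
    intro i hi hmem
    exact hxU (Set.mem_iUnion.2 ⟨i, Set.mem_iUnion.2 ⟨hi, hmem⟩⟩)
  have hfar : ∀ i : ℕ, i ≤ ℓ/2 → ε < |x - (i:ℝ)*π/ℓ| := by
    intro i hi
    have hni := hxU' i (Finset.mem_range.2 (Nat.lt_succ_of_le hi))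
    rw [Set.mem_Icc] at hni
    rcases not_and_or.mp hni with h | h
    · push_neg at h
      have h1 : ε < (i:ℝ)*π/ℓ - x := by linarith
      exact h1.trans_le (by rw [abs_sub_comm]; exact le_abs_self _)
    · push_neg at h
      have h1 : ε < x - (i:ℝ)*π/ℓ := by linarith
      exact h1.trans_le (le_abs_self _)
  have hxε : ε < x := by
    have h0 := hfar 0 (Nat.zero_le _)
    rw [show ((0:ℕ):ℝ)*π/ℓ = 0 by simp, sub_zero, abs_of_nonneg hx0] at h0
    exact h0
  have hsinx : (2/π)*ε ≤ Real.sin x := by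
    have h1 : (2/π)*ε ≤ (2/π)*x := by
      apply mul_le_mul_of_nonneg_left hxε.le (by positivity)
    linarith [Real.mul_le_sin hx0 hxpi]
  have hsinx0 : 0 < Real.sin x := lt_of_lt_of_le (by positivity) hsinx
  -- lower bound for |sin (ℓ x)|
  have hsinℓ : (2/π)*ε ≤ |Real.sin ((ℓ:ℝ)*x)| := by
    set y := (ℓ:ℝ)*x with hydef
    set k := round (y/π) with hkdef
    have hge := abs_sin_ge y
    have hy0 : 0 ≤ y := by positivity
    have hk0 : 0 ≤ k := by
      have h := abs_le.1 (abs_sub_round (y/π))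
      have hyπ : 0 ≤ y/π := by positivity
      have : (-1:ℝ) < (k:ℝ) := by linarith [h.1]
      have : (-1:ℤ) < k := by exact_mod_cast this
      omega
    have hdist : ε ≤ |y - (k:ℝ)*π| := by
      by_cases hsmall : k.toNat ≤ ℓ/2
      · have hf := hfar k.toNat hsmall
        have hkk : ((k.toNat:ℕ):ℝ) = (k:ℝ) := by exact_mod_cast Int.toNat_of_nonneg hk0
        have hℓpos : (0:ℝ) < (ℓ:ℝ) := by linarith
        have habs : |y - (k:ℝ)*π| = (ℓ:ℝ) * |x - ((k.toNat:ℕ):ℝ)*π/ℓ| := by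
          rw [← abs_of_pos hℓpos, ← abs_mul]
          congr 1
          rw [hkk, hydef]
          field_simp
          rw [abs_of_pos hℓpos]; ring
        rw [habs]
        calc ε = 1 * ε := (one_mul ε).symm
          _ ≤ (ℓ:ℝ) * |x - ((k.toNat:ℕ):ℝ)*π/ℓ| :=
            mul_le_mul hℓR hf.le hε0.le (by positivity)
      · push_neg at hsmall
        have h2i : ℓ + 1 ≤ 2 * k.toNat := by omega
        have hk2 : ((ℓ:ℝ) + 1)/2 ≤ (k:ℝ) := by
          have h1 : ((ℓ+1:ℕ):ℝ) ≤ ((2*k.toNat:ℕ):ℝ) := by exact_mod_cast h2i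
          have h2 : ((k.toNat:ℕ):ℝ) = (k:ℝ) := by exact_mod_cast Int.toNat_of_nonneg hk0
          push_cast at h1
          linarith
        have hyb : y ≤ (ℓ:ℝ)*(π/2) := by
          rw [hydef]
          apply mul_le_mul_of_nonneg_left hxpi (by positivity)
        have hky : π/2 ≤ (k:ℝ)*π - y := by nlinarith
        calc ε ≤ 1 := hε1
          _ ≤ π/2 := by linarith [Real.two_le_pi]
          _ ≤ |y - (k:ℝ)*π| := by
            rw [abs_sub_comm]
            exact hky.trans (le_abs_self _)
    calc (2/π)*ε ≤ (2/π)*|y - (k:ℝ)*π| := by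
          apply mul_le_mul_of_nonneg_left hdist (by positivity)
      _ ≤ |Real.sin y| := hge
  have hsl0 : 0 < |Real.sin ((ℓ:ℝ)*x)| := lt_of_lt_of_le (by positivity) hsinℓ
  clear hxU hxU' hfar
  -- quantitative reciprocal bounds
  set sa : ℝ := (n:ℝ)^a with hsadef
  have hsa1 : (1:ℝ) ≤ sa := by
    rw [hsadef, show (1:ℝ) = (1:ℝ)^a from (Real.one_rpow a).symm]
    exact Real.rpow_le_rpow (by norm_num) hnR1 ha0.le
  have hsa0 : (0:ℝ) < sa := by linarith
  have hεinv : ε * sa = 1 := by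
    rw [hεdef, hsadef, Real.rpow_neg hnR.le]
    field_simp
  clear_value ε sa
  have hπ4 := Real.pi_le_four
  have hquater : (1:ℝ) ≤ 4/π := by
    rw [le_div_iff₀ hπ]; linarith
  have hM1 : 1/Real.sin x ≤ 2*sa := by
    rw [div_le_iff₀ hsinx0]
    have hh := mul_le_mul_of_nonneg_left hsinx (by linarith : (0:ℝ) ≤ 2*sa)
    have he : 2*sa*(2/π*ε) = 4/π * (ε*sa) := by ring
    rw [he, hεinv, mul_one] at hh
    linarith
  have hM2 : 1/|Real.sin ((ℓ:ℝ)*x)| ≤ 2*sa := by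
    rw [div_le_iff₀ hsl0]
    have hh := mul_le_mul_of_nonneg_left hsinℓ (by linarith : (0:ℝ) ≤ 2*sa)
    have he : 2*sa*(2/π*ε) = 4/π * (ε*sa) := by ring
    rw [he, hεinv, mul_one] at hh
    linarith
  -- index arithmetic
  have hmul : ∀ j, j < m → ℓ*j + ℓ ≤ ℓ*m := by
    intro j hj
    calc ℓ*j + ℓ = ℓ*(j+1) := by ring
      _ ≤ ℓ*m := Nat.mul_le_mul (le_refl ℓ) hj
  have hcast_q : ∀ j, j < m → ∀ k : ℕ,
      ((n - ℓ + 1 - ℓ*j + k : ℕ):ℝ) = (n:ℝ) - ℓ + 1 - ℓ*j + k := by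
    intro j hj k
    have h2 := hmul j hj
    have hle1 : ℓ ≤ n := by omega
    have hle2 : ℓ*j ≤ n - ℓ + 1 := by omega
    rw [Nat.cast_add, Nat.cast_sub hle2, Nat.cast_add, Nat.cast_sub hle1]
    push_cast
    ring
  have hidx_q : ∀ j, j < m → ∀ k : ℕ,
      (n - ℓ + 1 - ℓ*(m-1-j) + k) = ℓ*m + t + (ℓ*j + k) := by
    intro j hj k
    have hC : ℓ*(m - 1 - j) = ℓ*m - ℓ - ℓ*j := by
      rw [Nat.mul_sub, Nat.mul_sub, Nat.mul_one]
    have h2 := hmul j hj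
    omega
  -- the exact rearrangement
  have hbi := big_identity ℓ m n t x hnt hcast_q hidx_q
  set D : ℝ := ∑ v ∈ Finset.range (n+1), (v:ℝ) * Real.sin (2*(v:ℝ)*x)/2 with hDdef
  set W : ℝ := ∑ k ∈ Finset.range ℓ,
      (((n:ℝ) - (ℓ:ℝ) + 1 + 2*(k:ℝ))/2) * Real.sin (((n:ℝ) - (ℓ:ℝ) + 1 + 2*(k:ℝ))*x) with hWdef
  set Y : ℝ := ∑ j ∈ Finset.range m,
      ((2*(ℓ:ℝ)*(j:ℝ) + (ℓ:ℝ) - 1 - (n:ℝ))/2)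
        * Real.sin ((2*(ℓ:ℝ)*(j:ℝ) + (ℓ:ℝ) - 1 - (n:ℝ))*x) with hYdef
  set U : ℝ := (n : ℝ) ^ 2 * uFun ℓ x * Real.sin (n * x) / 4 with hUdef
  clear_value D W Y U
  -- bound |D|
  have hDb : |D| ≤ ((n:ℝ)+1) * (2*sa) := by
    have htrans : D = ∑ v ∈ Finset.range (n+1),
        (0 + (1/2)*(v:ℝ)) * Real.sin (0 + 2*(v:ℝ)*x) := by
      rw [hDdef]
      exact Finset.sum_congr rfl fun v _ => by rw [zero_add, zero_add]; ring
    rw [htrans]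
    have hab := abel_linear 0 (1/2) 0 x (n+1) (ne_of_gt hsinx0)
    rw [abs_of_pos hsinx0] at hab
    have h1 : (|(0:ℝ)| + 2 * |(1/2:ℝ)| * ((n+1:ℕ):ℝ)) / Real.sin x
        = ((n:ℝ)+1) * (1/Real.sin x) := by
      rw [abs_zero, abs_of_pos (by norm_num : (0:ℝ) < 1/2)]
      push_cast
      ring
    rw [h1] at hab
    calc |∑ v ∈ Finset.range (n+1), (0 + (1/2)*(v:ℝ)) * Real.sin (0 + 2*(v:ℝ)*x)|
        ≤ ((n:ℝ)+1) * (1/Real.sin x) := hab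
      _ ≤ ((n:ℝ)+1) * (2*sa) := by
        apply mul_le_mul_of_nonneg_left hM1 (by linarith)
  -- bound |Y|
  have hYb : |Y| ≤ (((n:ℝ)+1)/2 + 2*(ℓ:ℝ)*m) * (2*sa) := by
    have htrans : Y = ∑ j ∈ Finset.range m,
        ((((ℓ:ℝ)-1-(n:ℝ))/2) + (ℓ:ℝ)*(j:ℝ))
          * Real.sin ((((ℓ:ℝ)-1-(n:ℝ))*x) + 2*(j:ℝ)*((ℓ:ℝ)*x)) := by
      rw [hYdef]
      refine Finset.sum_congr rfl fun j _ => ?_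
      rw [show (((ℓ:ℝ)-1-(n:ℝ))*x) + 2*(j:ℝ)*((ℓ:ℝ)*x)
          = (2*(ℓ:ℝ)*(j:ℝ) + (ℓ:ℝ) - 1 - (n:ℝ))*x by ring]
      ring
    rw [htrans]
    have hab := abel_linear (((ℓ:ℝ)-1-(n:ℝ))/2) ((ℓ:ℝ)) (((ℓ:ℝ)-1-(n:ℝ))*x)
        ((ℓ:ℝ)*x) m (by intro h; rw [h] at hsl0; simp at hsl0)
    have h1 : |((ℓ:ℝ)-1-(n:ℝ))/2| = ((n:ℝ)+1-(ℓ:ℝ))/2 := by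
      rw [abs_of_nonpos (by linarith)]
      ring
    have h2 : |(ℓ:ℝ)| = (ℓ:ℝ) := abs_of_pos (by linarith)
    rw [h1, h2] at hab
    calc |∑ j ∈ Finset.range m, ((((ℓ:ℝ)-1-(n:ℝ))/2) + (ℓ:ℝ)*(j:ℝ))
          * Real.sin ((((ℓ:ℝ)-1-(n:ℝ))*x) + 2*(j:ℝ)*((ℓ:ℝ)*x))|
        ≤ (((n:ℝ)+1-(ℓ:ℝ))/2 + 2*(ℓ:ℝ)*m) / |Real.sin ((ℓ:ℝ)*x)| := hab
      _ = (((n:ℝ)+1-(ℓ:ℝ))/2 + 2*(ℓ:ℝ)*m) * (1/|Real.sin ((ℓ:ℝ)*x)|) := by ring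
      _ ≤ (((n:ℝ)+1)/2 + 2*(ℓ:ℝ)*m) * (2*sa) := by
        have hm0 : (0:ℝ) ≤ (m:ℝ) := Nat.cast_nonneg m
        apply mul_le_mul (by linarith) hM2 (by positivity) (by positivity)
  -- bound |U - m W|
  have hZb : |U - (m:ℝ)*W| ≤ (n:ℝ)*sa + (n:ℝ)*(ℓ:ℝ)/2 := by
    have hAP : ∑ k ∈ Finset.range ℓ, Real.sin (((n:ℝ)-(ℓ:ℝ)+1+2*(k:ℝ))*x)
        = Real.sin ((n:ℝ)*x) * Real.sin ((ℓ:ℝ)*x) / Real.sin x := by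
      have h := sin_sum_AP (((n:ℝ)-(ℓ:ℝ)+1)*x) x ℓ (ne_of_gt hsinx0)
      have e : ∀ k:ℕ, (((n:ℝ)-(ℓ:ℝ)+1)*x) + 2*(k:ℝ)*x = ((n:ℝ)-(ℓ:ℝ)+1+2*(k:ℝ))*x :=
        fun k => by ring
      calc ∑ k ∈ Finset.range ℓ, Real.sin (((n:ℝ)-(ℓ:ℝ)+1+2*(k:ℝ))*x)
          = ∑ k ∈ Finset.range ℓ, Real.sin ((((n:ℝ)-(ℓ:ℝ)+1)*x) + 2*(k:ℝ)*x) :=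
            Finset.sum_congr rfl fun k _ => by rw [e k]
        _ = Real.sin ((((n:ℝ)-(ℓ:ℝ)+1)*x) + ((ℓ:ℝ)-1)*x) * Real.sin ((ℓ:ℝ)*x) / Real.sin x := h
        _ = Real.sin ((n:ℝ)*x) * Real.sin ((ℓ:ℝ)*x) / Real.sin x := by
            rw [show (((n:ℝ)-(ℓ:ℝ)+1)*x) + ((ℓ:ℝ)-1)*x = (n:ℝ)*x by ring]
    set R : ℝ := ∑ k ∈ Finset.range ℓ,
        ((1-(ℓ:ℝ)+2*(k:ℝ))/2) * Real.sin (((n:ℝ)-(ℓ:ℝ)+1+2*(k:ℝ))*x) with hRdef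
    have hW2 : W = ((n:ℝ)/2) * (Real.sin ((n:ℝ)*x) * Real.sin ((ℓ:ℝ)*x) / Real.sin x) + R := by
      rw [hWdef, hRdef, ← hAP, Finset.mul_sum, ← Finset.sum_add_distrib]
      exact Finset.sum_congr rfl fun k _ => by ring
    have hRb : |R| ≤ (ℓ:ℝ)*(ℓ:ℝ)/2 := by
      rw [hRdef]
      refine (Finset.abs_sum_le_sum_abs _ _).trans ?_
      have hterm : ∀ k ∈ Finset.range ℓ,
          |((1-(ℓ:ℝ)+2*(k:ℝ))/2) * Real.sin (((n:ℝ)-(ℓ:ℝ)+1+2*(k:ℝ))*x)| ≤ (ℓ:ℝ)/2 := by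
        intro k hk
        rw [Finset.mem_range] at hk
        have hkℓ : (k:ℝ) ≤ (ℓ:ℝ) - 1 := by
          have : (k+1:ℕ) ≤ ℓ := hk
          have : ((k+1:ℕ):ℝ) ≤ (ℓ:ℝ) := by exact_mod_cast this
          push_cast at this; linarith
        have hk0 : (0:ℝ) ≤ (k:ℝ) := Nat.cast_nonneg k
        rw [abs_mul]
        have h1 : |(1-(ℓ:ℝ)+2*(k:ℝ))/2| ≤ (ℓ:ℝ)/2 := by
          rw [abs_le]; constructor <;> [linarith; linarith]
        have h2 : |Real.sin (((n:ℝ)-(ℓ:ℝ)+1+2*(k:ℝ))*x)| ≤ 1 :=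
          abs_le.2 ⟨Real.neg_one_le_sin _, Real.sin_le_one _⟩
        calc |(1-(ℓ:ℝ)+2*(k:ℝ))/2| * |Real.sin (((n:ℝ)-(ℓ:ℝ)+1+2*(k:ℝ))*x)|
            ≤ ((ℓ:ℝ)/2) * 1 := mul_le_mul h1 h2 (abs_nonneg _) (by linarith)
          _ = (ℓ:ℝ)/2 := mul_one _
      refine (Finset.sum_le_sum hterm).trans ?_
      rw [Finset.sum_const, Finset.card_range, nsmul_eq_mul]
      apply le_of_eq; ring
    have hrR : (r:ℝ) = (n:ℝ) - 2*(ℓ:ℝ)*m := by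
      have h : (n:ℝ) = 2*(ℓ:ℝ)*(m:ℝ) + (r:ℝ) := by exact_mod_cast hn
      linarith
    have hcomb : U - (m:ℝ)*((n:ℝ)/2 * (Real.sin ((n:ℝ)*x) * Real.sin ((ℓ:ℝ)*x) / Real.sin x))
        = (Real.sin ((n:ℝ)*x) * Real.sin ((ℓ:ℝ)*x) / Real.sin x) * ((n:ℝ)*(r:ℝ)/(4*(ℓ:ℝ))) := by
      rw [hUdef, uFun, hrR]
      have hsx : Real.sin x ≠ 0 := ne_of_gt hsinx0
      have hℓ0 : (ℓ:ℝ) ≠ 0 := by linarith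
      field_simp
      ring
    have hrabs : |(r:ℝ)| ≤ 2*(ℓ:ℝ) := by
      rw [abs_le]; constructor
      · have : (-1:ℤ) ≤ r := hr1
        have : (-1:ℝ) ≤ (r:ℝ) := by exact_mod_cast this
        linarith
      · have : (r:ℝ) ≤ 2*(ℓ:ℝ) - 2 := by exact_mod_cast hr2
        linarith
    have hSb : |Real.sin ((n:ℝ)*x) * Real.sin ((ℓ:ℝ)*x) / Real.sin x| ≤ 1/Real.sin x := by
      rw [abs_div, abs_of_pos hsinx0, abs_mul]
      have hnum : |Real.sin ((n:ℝ)*x)| * |Real.sin ((ℓ:ℝ)*x)| ≤ 1 := by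
        have a1 : |Real.sin ((n:ℝ)*x)| ≤ 1 := abs_le.2 ⟨Real.neg_one_le_sin _, Real.sin_le_one _⟩
        have a2 : |Real.sin ((ℓ:ℝ)*x)| ≤ 1 := abs_le.2 ⟨Real.neg_one_le_sin _, Real.sin_le_one _⟩
        calc |Real.sin ((n:ℝ)*x)| * |Real.sin ((ℓ:ℝ)*x)|
            ≤ 1 * |Real.sin ((ℓ:ℝ)*x)| := mul_le_mul_of_nonneg_right a1 (abs_nonneg _)
          _ = |Real.sin ((ℓ:ℝ)*x)| := one_mul _
          _ ≤ 1 := a2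
      gcongr
    have hsplit : U - (m:ℝ)*W
        = (Real.sin ((n:ℝ)*x) * Real.sin ((ℓ:ℝ)*x) / Real.sin x) * ((n:ℝ)*(r:ℝ)/(4*(ℓ:ℝ)))
          - (m:ℝ)*R := by
      rw [hW2, ← hcomb]; ring
    have h4ℓ : (0:ℝ) < 4*(ℓ:ℝ) := by linarith
    have h1 : |(Real.sin ((n:ℝ)*x) * Real.sin ((ℓ:ℝ)*x) / Real.sin x)
        * ((n:ℝ)*(r:ℝ)/(4*(ℓ:ℝ)))| ≤ (n:ℝ)*sa := by
      rw [abs_mul]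
      have e1 : |(n:ℝ)*(r:ℝ)/(4*(ℓ:ℝ))| = (n:ℝ)*|(r:ℝ)|/(4*(ℓ:ℝ)) := by
        rw [abs_div, abs_mul, abs_of_pos hnR, abs_of_pos h4ℓ]
      rw [e1]
      calc |Real.sin ((n:ℝ)*x) * Real.sin ((ℓ:ℝ)*x) / Real.sin x| * ((n:ℝ)*|(r:ℝ)|/(4*(ℓ:ℝ)))
          ≤ (1/Real.sin x) * ((n:ℝ)*(2*(ℓ:ℝ))/(4*(ℓ:ℝ))) := by
            apply mul_le_mul hSb ?_ (by positivity) (by positivity)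
            gcongr
        _ = (1/Real.sin x) * ((n:ℝ)/2) := by
            congr 1
            field_simp
            ring
        _ ≤ (2*sa) * ((n:ℝ)/2) := by
            apply mul_le_mul_of_nonneg_right hM1 (by linarith)
        _ = (n:ℝ)*sa := by ring
    have h2 : |(m:ℝ)*R| ≤ (n:ℝ)*(ℓ:ℝ)/2 := by
      rw [abs_mul, abs_of_nonneg (Nat.cast_nonneg m)]
      calc (m:ℝ)*|R| ≤ (m:ℝ)*((ℓ:ℝ)*(ℓ:ℝ)/2) :=
            mul_le_mul_of_nonneg_left hRb (Nat.cast_nonneg m)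
        _ = ((ℓ:ℝ)*(m:ℝ))*(ℓ:ℝ)/2 := by ring
        _ ≤ (n:ℝ)*(ℓ:ℝ)/2 := by
            have := mul_le_mul_of_nonneg_right hℓmR (by linarith : (0:ℝ) ≤ (ℓ:ℝ))
            linarith
    rw [hsplit]
    refine (abs_sub _ _).trans ?_
    linarith
  -- assemble
  have goal_eq : -((∑ j ∈ Finset.range m, ∑ k ∈ Finset.range ℓ,
        (Real.cos (((ℓ * j + k : ℕ) : ℝ) * x)
          + Real.cos (((n - ℓ + 1 - ℓ * j + k : ℕ) : ℝ) * x))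
        * (((ℓ * j + k : ℕ) : ℝ) * Real.sin (((ℓ * j + k : ℕ) : ℝ) * x)
          + ((n - ℓ + 1 - ℓ * j + k : ℕ) : ℝ)
              * Real.sin (((n - ℓ + 1 - ℓ * j + k : ℕ) : ℝ) * x))))
      - (∑ i ∈ Finset.range t,
          ((ℓ * m + i : ℕ) : ℝ) * Real.sin (((ℓ * m + i : ℕ) : ℝ) * x)
            * Real.cos (((ℓ * m + i : ℕ) : ℝ) * x))
      + U
      = -D - (ℓ:ℝ)*Y + (U - (m:ℝ)*W) := by linarith
  rw [goal_eq]
  clear goal_eq hbi hcast_q hidx_q hmul hDdef hWdef hYdef hn htr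
  have habs : |-D - (ℓ:ℝ)*Y + (U - (m:ℝ)*W)| ≤ |D| + (ℓ:ℝ)*|Y| + |U - (m:ℝ)*W| := by
    have t1 := abs_add_le (-D - (ℓ:ℝ)*Y) (U - (m:ℝ)*W)
    have t2 : |-D - (ℓ:ℝ)*Y| ≤ |D| + |(ℓ:ℝ)*Y| := by
      rw [show -D - (ℓ:ℝ)*Y = -(D + (ℓ:ℝ)*Y) by ring, abs_neg]
      exact abs_add_le _ _
    have t3 : |(ℓ:ℝ)*Y| = (ℓ:ℝ)*|Y| := by
      rw [abs_mul, abs_of_pos (by linarith : (0:ℝ) < (ℓ:ℝ))]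
    linarith
  have hpow : (n:ℝ)^((1:ℝ)+a) = (n:ℝ) * sa := by
    rw [Real.rpow_add hnR, Real.rpow_one, hsadef]
  have hnsa : (n:ℝ) ≤ (n:ℝ)*sa := le_mul_of_one_le_right hnR.le hsa1
  have hK0 : (0:ℝ) ≤ (n:ℝ)*sa := mul_nonneg hnR.le hsa0.le
  have e1 : ((n:ℝ)+1)*(2*sa) ≤ 4*((n:ℝ)*sa) := by
    calc ((n:ℝ)+1)*(2*sa) ≤ (2*(n:ℝ))*(2*sa) :=
          mul_le_mul_of_nonneg_right (by linarith) (by linarith)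
      _ = 4*((n:ℝ)*sa) := by ring
  have e2' : ((n:ℝ)+1)/2 + 2*(ℓ:ℝ)*m ≤ 3*(n:ℝ) := by linarith
  have e2 : (ℓ:ℝ)*((((n:ℝ)+1)/2 + 2*(ℓ:ℝ)*m) * (2*sa)) ≤ 6*((ℓ:ℝ)*((n:ℝ)*sa)) := by
    have h := mul_le_mul_of_nonneg_right e2'
      (mul_nonneg (by linarith : (0:ℝ) ≤ (ℓ:ℝ)) (by linarith : (0:ℝ) ≤ 2*sa))
    calc (ℓ:ℝ)*((((n:ℝ)+1)/2 + 2*(ℓ:ℝ)*m) * (2*sa))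
        = (((n:ℝ)+1)/2 + 2*(ℓ:ℝ)*m) * ((ℓ:ℝ)*(2*sa)) := by ring
      _ ≤ 3*(n:ℝ) * ((ℓ:ℝ)*(2*sa)) := h
      _ = 6*((ℓ:ℝ)*((n:ℝ)*sa)) := by ring
  have e3 : (n:ℝ)*(ℓ:ℝ)/2 ≤ ((ℓ:ℝ)*((n:ℝ)*sa))/2 := by
    have := mul_le_mul_of_nonneg_right hnsa (by linarith : (0:ℝ) ≤ (ℓ:ℝ))
    linarith
  have hℓK : (n:ℝ)*sa ≤ (ℓ:ℝ)*((n:ℝ)*sa) := le_mul_of_one_le_left hK0 hℓR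
  calc |-D - (ℓ:ℝ)*Y + (U - (m:ℝ)*W)| ≤ |D| + (ℓ:ℝ)*|Y| + |U - (m:ℝ)*W| := habs
    _ ≤ ((n:ℝ)+1)*(2*sa) + (ℓ:ℝ)*((((n:ℝ)+1)/2 + 2*(ℓ:ℝ)*m) * (2*sa))
        + ((n:ℝ)*sa + (n:ℝ)*(ℓ:ℝ)/2) := by
        refine add_le_add (add_le_add hDb ?_) hZb
        exact mul_le_mul_of_nonneg_left hYb (by linarith)
    _ ≤ 20*((ℓ:ℝ)+1) * ((n:ℝ)^((1:ℝ)+a)) := by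
        rw [hpow]
        linarith [e1, e2, e3, hℓK, hK0]
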